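/- arXiv:1705.02890 — 2 statements merged into one kernel-verified Lean document; each statement's English description precedes it below -/
import Mathlib

section
/- Let μ be the measure on the upper half-plane {z ∈ ℂ : Im z > 0} with density (Im z)⁻² with respect to 2-dimensional Lebesgue measure. For all ℓ > 0 and h > 0, the μ-measure of the set {z : Im z > 0, 1 ≤ |z| ≤ exp ℓ, Re z ≥ 0, |z| ≤ cosh(h) · Im z} equals ℓ · sinh(h). -/
/-!
In polar coordinates `z = r e^{iθ}` the hyperbolic area element `dx dy / y²` becomes
`dr dθ / (r sin² θ)`, and the rounded rectangle becomes the product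
`[1, e^ℓ] × [θ_h, π/2]` with `sin θ_h = 1 / cosh h`. The area therefore factors as
`(∫ dr / r) · (∫ dθ / sin² θ) = ℓ · cot θ_h = ℓ · sinh h`.
-/

open MeasureTheory

/-- The hyperbolic area measure on ℂ (supported meaningfully on the upper half-plane):
density `(Im z)⁻²` with respect to 2-dimensional Lebesgue measure. -/
noncomputable def hypArea : Measure ℂ :=
  volume.withDensity fun z => ENNReal.ofReal ((z.im) ^ 2)⁻¹

open Real Set

theorem hasDerivAt_neg_cot {θ : ℝ} (hθ : sin θ ≠ 0) :
    HasDerivAt (fun x => -cot x) (sin θ ^ 2)⁻¹ θ := by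
  simp only [cot_eq_cos_div_sin]
  refine ((hasDerivAt_cos θ).div (hasDerivAt_sin θ) hθ).neg.congr_deriv ?_
  field_simp
  linear_combination sin_sq_add_cos_sq θ

theorem lintegral_Icc_ofReal_eq_intervalIntegral {f : ℝ → ℝ} {a b : ℝ} (hab : a ≤ b)
    (hf : ContinuousOn f (Icc a b)) (hf₀ : ∀ x ∈ Icc a b, 0 ≤ f x) :
    ∫⁻ x in Icc a b, ENNReal.ofReal (f x) = ENNReal.ofReal (∫ x in a..b, f x) := by
  rw [intervalIntegral.integral_of_le hab, ← integral_Icc_eq_integral_Ioc,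
    ofReal_integral_eq_lintegral_ofReal (hf.integrableOn_compact isCompact_Icc)
      ((ae_restrict_iff' measurableSet_Icc).mpr (.of_forall hf₀))]

theorem lintegral_inv_Icc {a b : ℝ} (ha : 0 < a) (hb : 0 < b) :
    ∫⁻ r in Icc a b, ENNReal.ofReal r⁻¹ = ENNReal.ofReal (log (b / a)) := by
  rcases le_or_gt a b with hab | hba
  · rw [lintegral_Icc_ofReal_eq_intervalIntegral hab
      (continuousOn_inv₀.mono fun r hr => (ha.trans_le hr.1).ne')
      (fun r hr => inv_nonneg.2 (ha.le.trans hr.1)), integral_inv_of_pos ha hb]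
  · rw [Icc_eq_empty_of_lt hba, Measure.restrict_empty, lintegral_zero_measure,
      ENNReal.ofReal_of_nonpos (log_nonpos (by positivity) ((div_le_one ha).2 hba.le))]

theorem lintegral_inv_sin_sq_Icc {a b : ℝ} (ha : 0 < a) (hab : a ≤ b) (hb : b < π) :
    ∫⁻ θ in Icc a b, ENNReal.ofReal (sin θ ^ 2)⁻¹ = ENNReal.ofReal (cot a - cot b) := by
  have hsin : ∀ θ ∈ Icc a b, sin θ ≠ 0 := fun θ hθ =>
    (sin_pos_of_pos_of_lt_pi (ha.trans_le hθ.1) (hθ.2.trans_lt hb)).ne'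
  have hcont : ContinuousOn (fun θ => (sin θ ^ 2)⁻¹) (Icc a b) :=
    (continuous_sin.pow 2).continuousOn.inv₀ fun θ hθ => pow_ne_zero 2 (hsin θ hθ)
  rw [lintegral_Icc_ofReal_eq_intervalIntegral hab hcont (fun θ _ => by positivity),
    intervalIntegral.integral_eq_sub_of_hasDerivAt (f := fun x => -cot x)
      (fun θ hθ => hasDerivAt_neg_cot (hsin θ (by rwa [uIcc_of_le hab] at hθ)))
      (hcont.intervalIntegrable_of_Icc hab)]
  ring_nf

theorem cot_arcsin_inv_cosh (h : ℝ) : cot (arcsin (cosh h)⁻¹) = |sinh h| := by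
  have hc := cosh_pos h
  have hc1 : (cosh h)⁻¹ ≤ 1 := inv_le_one_of_one_le₀ (one_le_cosh h)
  have hsq : 1 - (cosh h)⁻¹ ^ 2 = (sinh h / cosh h) ^ 2 := by
    field_simp
    linear_combination cosh_sq h
  rw [cot_eq_cos_div_sin, cos_arcsin, sin_arcsin (by linarith [inv_pos.2 hc]) hc1, hsq,
    sqrt_sq_eq_abs, abs_div, abs_of_pos hc]
  field_simp

theorem cos_nonneg_and_le_sin_iff {θ s : ℝ} (hθ : θ ∈ Ioo (-π) π) (hs : s ∈ Icc (-1) 1) :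
    0 ≤ cos θ ∧ s ≤ sin θ ↔ θ ∈ Icc (arcsin s) (π / 2) := by
  constructor
  · rintro ⟨hcos, hsin⟩
    have hθ' : θ ∈ Icc (-(π / 2)) (π / 2) := by
      constructor <;> by_contra! hlt
      · have := cos_neg_of_pi_div_two_lt_of_lt (x := -θ) (by linarith) (by linarith [hθ.1])
        rw [cos_neg] at this
        linarith
      · have := cos_neg_of_pi_div_two_lt_of_lt hlt (by linarith [hθ.2])
        linarith
    exact ⟨(arcsin_le_iff_le_sin hs hθ').2 hsin, hθ'.2⟩
  · rintro ⟨hle, hθ₂⟩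
    have hθ' : θ ∈ Icc (-(π / 2)) (π / 2) := ⟨(neg_pi_div_two_le_arcsin s).trans hle, hθ₂⟩
    exact ⟨cos_nonneg_of_mem_Icc hθ', (arcsin_le_iff_le_sin hs hθ').1 hle⟩

theorem Complex.polarCoord_symm_re (p : ℝ × ℝ) :
    (Complex.polarCoord.symm p).re = p.1 * Real.cos p.2 := by
  simp [Complex.cos_ofReal_re]

theorem Complex.polarCoord_symm_im (p : ℝ × ℝ) :
    (Complex.polarCoord.symm p).im = p.1 * Real.sin p.2 := by
  simp [Complex.sin_ofReal_re]

/-- Points over the geodesic segment from `i` to `exp ℓ • i`, on the side `0 ≤ re`, within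
hyperbolic distance `h` of the imaginary axis (the distance `d` of `z` to the axis satisfies
`‖z‖ = cosh d * im z`). -/
def roundedRectangle (ℓ h : ℝ) : Set ℂ :=
  {z : ℂ | 0 < z.im ∧ 1 ≤ ‖z‖ ∧ ‖z‖ ≤ exp ℓ ∧ 0 ≤ z.re ∧ ‖z‖ ≤ cosh h * z.im}

theorem measurableSet_roundedRectangle (ℓ h : ℝ) : MeasurableSet (roundedRectangle ℓ h) := by
  unfold roundedRectangle
  measurability

theorem polarCoord_symm_mem_roundedRectangle_iff {ℓ h r θ : ℝ} (hr : 0 < r)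
    (hθ : θ ∈ Ioo (-π) π) :
    Complex.polarCoord.symm (r, θ) ∈ roundedRectangle ℓ h ↔
      r ∈ Icc 1 (exp ℓ) ∧ θ ∈ Icc (arcsin (cosh h)⁻¹) (π / 2) := by
  have hc := cosh_pos h
  rw [← cos_nonneg_and_le_sin_iff hθ
    ⟨by linarith [inv_pos.2 hc], inv_le_one_of_one_le₀ (one_le_cosh h)⟩]
  have hsin : r ≤ cosh h * (r * sin θ) ↔ (cosh h)⁻¹ ≤ sin θ := by
    rw [inv_le_iff_one_le_mul₀' hc, mul_left_comm, le_mul_iff_one_le_right hr]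
  have hsin_pos : (cosh h)⁻¹ ≤ sin θ → 0 < sin θ := (inv_pos.2 hc).trans_le
  simp only [roundedRectangle, mem_ofPred_eq, Complex.polarCoord_symm_im,
    Complex.polarCoord_symm_re, Complex.norm_polarCoord_symm, abs_of_pos hr,
    mul_pos_iff_of_pos_left hr, mul_nonneg_iff_of_pos_left hr, hsin, mem_Icc]
  tauto

theorem polarCoord_symm_preimage_roundedRectangle (ℓ h : ℝ) :
    Complex.polarCoord.symm ⁻¹' roundedRectangle ℓ h ∩ polarCoord.target =
      Icc 1 (exp ℓ) ×ˢ Icc (arcsin (cosh h)⁻¹) (π / 2) := by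
  ext ⟨r, θ⟩
  constructor
  · rintro ⟨hmem, hr, hθ⟩
    exact (polarCoord_symm_mem_roundedRectangle_iff hr hθ).1 hmem
  · rintro ⟨hr, hθ⟩
    have hr₀ : 0 < r := one_pos.trans_le hr.1
    have hθ' : θ ∈ Ioo (-π) π :=
      ⟨by linarith [neg_pi_div_two_le_arcsin (cosh h)⁻¹, hθ.1, pi_pos],
        by linarith [hθ.2, pi_pos]⟩
    exact ⟨(polarCoord_symm_mem_roundedRectangle_iff hr₀ hθ').2 ⟨hr, hθ⟩, hr₀, hθ'⟩

theorem hypArea_eq_setLIntegral_polarCoord {S : Set ℂ} (hS : MeasurableSet S) :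
    hypArea S = ∫⁻ p in Complex.polarCoord.symm ⁻¹' S ∩ polarCoord.target,
      ENNReal.ofReal p.1⁻¹ * ENNReal.ofReal (sin p.2 ^ 2)⁻¹ := by
  have hmeas : Measurable Complex.polarCoord.symm :=
    Complex.measurableEquivRealProd.symm.measurable.comp continuous_polarCoord_symm.measurable
  rw [hypArea, withDensity_apply _ hS, ← lintegral_indicator hS,
    ← Complex.lintegral_comp_polarCoord_symm, ← Measure.restrict_restrict (hmeas hS),
    ← lintegral_indicator (hmeas hS)]
  refine setLIntegral_congr_fun polarCoord.open_target.measurableSet fun p hp => ?_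
  rw [smul_eq_mul, ← indicator_comp_right]
  by_cases hpS : p ∈ Complex.polarCoord.symm ⁻¹' S
  · rw [indicator_of_mem hpS, indicator_of_mem hpS, Function.comp_apply,
      Complex.polarCoord_symm_im,
      ← ENNReal.ofReal_mul hp.1.le, ← ENNReal.ofReal_mul (inv_nonneg.2 hp.1.le)]
    congr 1
    field_simp
  · rw [indicator_of_notMem hpS, indicator_of_notMem hpS, mul_zero]

theorem hypArea_roundedRectangle (ℓ h : ℝ) (hh : 0 ≤ h) :
    hypArea (roundedRectangle ℓ h) = ENNReal.ofReal (ℓ * sinh h) := by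
  have hθ₀ : 0 < arcsin (cosh h)⁻¹ := arcsin_pos.2 (inv_pos.2 (cosh_pos h))
  have hcot : cot (π / 2) = 0 := by simp [cot_eq_cos_div_sin]
  rw [hypArea_eq_setLIntegral_polarCoord (measurableSet_roundedRectangle ℓ h),
    polarCoord_symm_preimage_roundedRectangle, Measure.volume_eq_prod, ← Measure.prod_restrict,
    lintegral_prod_mul (f := fun r => ENNReal.ofReal r⁻¹)
      (g := fun θ => ENNReal.ofReal (sin θ ^ 2)⁻¹) (by fun_prop) (by fun_prop),
    lintegral_inv_Icc one_pos (exp_pos ℓ), div_one, log_exp,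
    lintegral_inv_sin_sq_Icc hθ₀ (arcsin_le_pi_div_two _) (by linarith [pi_pos]), hcot, sub_zero,
    cot_arcsin_inv_cosh, abs_of_nonneg (sinh_nonneg_iff.2 hh),
    ENNReal.ofReal_mul' (sinh_nonneg_iff.2 hh)]

theorem stmt8_general (ℓ h : ℝ) (hh : 0 < h) :
    hypArea {z : ℂ | 0 < z.im ∧ 1 ≤ ‖z‖ ∧ ‖z‖ ≤ Real.exp ℓ ∧
        0 ≤ z.re ∧ ‖z‖ ≤ Real.cosh h * z.im} =
      ENNReal.ofReal (ℓ * Real.sinh h) :=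
  hypArea_roundedRectangle ℓ h hh.le

theorem stmt8 (ℓ h : ℝ) (hℓ : 0 < ℓ) (hh : 0 < h) :
    hypArea {z : ℂ | 0 < z.im ∧ 1 ≤ ‖z‖ ∧ ‖z‖ ≤ Real.exp ℓ ∧
        0 ≤ z.re ∧ ‖z‖ ≤ Real.cosh h * z.im} =
      ENNReal.ofReal (ℓ * Real.sinh h) :=
  stmt8_general ℓ h hh
end

section
/- Let E = ℝⁿ (or any finite-dimensional real normed space), let Z ⊆ E be open, let S ⊆ E, and let x ∈ convexHull(S) with x ∉ Z. Then x ∈ convexHull((S \ Z) ∪ frontier(Z)). -/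
/-!
Every `a ∈ S` can be replaced by a point `a'` of `(S \ Z) ∪ frontier Z` on the ray from `x`
through `a`: either `a ∉ Z` and `a' = a`, or `a ∈ Z` and, the segment `[x, a]` being connected
and joining a point outside `Z` to a point of `Z`, it meets `frontier Z`. Unless `x` itself lies
on the frontier, `a' ≠ x`, and moving the vertices of a convex combination representing `x`
along rays from `x` keeps `x` in the convex hull after reweighting.
-/

open Set

theorem IsPreconnected.inter_frontier_nonempty {X : Type*} [TopologicalSpace X] {s t : Set X}
    (hs : IsPreconnected s) (hst : (s ∩ t).Nonempty) (hsdt : (s \ t).Nonempty) :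
    (s ∩ frontier t).Nonempty := by
  by_contra h
  have hcover : s ⊆ interior t ∪ (closure t)ᶜ := fun y hy => by
    have : y ∉ frontier t := fun hf => h ⟨y, hy, hf⟩
    rw [frontier, mem_sdiff, not_and_not_right] at this
    by_cases hy' : y ∈ closure t
    exacts [Or.inl (this hy'), Or.inr hy']
  obtain ⟨y, -, hyint, hycl⟩ := hs _ _ isOpen_interior isClosed_closure.isOpen_compl hcover
    (hst.mono fun y hy => ⟨hy.1, (hcover hy.1).resolve_right (not_not.2 (subset_closure hy.2))⟩)
    (hsdt.mono fun y hy => ⟨hy.1, (hcover hy.1).resolve_left fun hi => hy.2 (interior_subset hi)⟩)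
  exact hycl (interior_subset_closure hyint)

section Rays

variable {𝕜 E : Type*} [Field 𝕜] [LinearOrder 𝕜] [IsStrictOrderedRing 𝕜] [AddCommGroup E]
  [Module 𝕜 E]

theorem mem_convexHull_of_forall_ray_meets {S T : Set E} {x : E} (hx : x ∈ convexHull 𝕜 S)
    (h : ∀ a ∈ S, ∃ t : 𝕜, 0 < t ∧ x + t • (a - x) ∈ T) : x ∈ convexHull 𝕜 T := by
  rw [convexHull_eq] at hx
  obtain ⟨ι, s, w, z, hw₀, hw₁, hzS, hxz⟩ := hx
  choose! τ hτ hτT using h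
  set v : ι → 𝕜 := fun i => w i / τ (z i)
  have hv₀ : ∀ i ∈ s, 0 ≤ v i := fun i hi => div_nonneg (hw₀ i hi) (hτ _ (hzS i hi)).le
  have hv_pos : 0 < ∑ i ∈ s, v i := by
    obtain ⟨i, hi, hwi⟩ := (Finset.sum_pos_iff_of_nonneg hw₀).1 (hw₁ ▸ one_pos)
    exact Finset.sum_pos_iff_of_nonneg hv₀ |>.2 ⟨i, hi, div_pos hwi (hτ _ (hzS i hi))⟩
  have hbalanced : ∑ i ∈ s, w i • (z i - x) = 0 := by
    simp only [smul_sub, Finset.sum_sub_distrib, ← Finset.sum_smul, hw₁, one_smul]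
    rw [← Finset.centerMass_eq_of_sum_1 _ _ hw₁, hxz, sub_self]
  have hcm : s.centerMass v (fun i => x + τ (z i) • (z i - x)) = x := by
    have hterm : ∀ i ∈ s, v i • (x + τ (z i) • (z i - x)) = v i • x + w i • (z i - x) :=
      fun i hi => by rw [smul_add, smul_smul, div_mul_cancel₀ _ (hτ _ (hzS i hi)).ne']
    rw [Finset.centerMass, Finset.sum_congr rfl hterm, Finset.sum_add_distrib, ← Finset.sum_smul,
      hbalanced, add_zero, inv_smul_smul₀ hv_pos.ne']
  exact hcm ▸ s.centerMass_mem_convexHull hv₀ hv_pos fun i hi => hτT _ (hzS i hi)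

end Rays

theorem stmt9_general {E : Type*} [NormedAddCommGroup E] [NormedSpace ℝ E]
    (Z S : Set E) (x : E)
    (hx : x ∈ convexHull ℝ S) (hxZ : x ∉ Z) :
    x ∈ convexHull ℝ ((S \ Z) ∪ frontier Z) := by
  by_cases hxf : x ∈ frontier Z
  · exact subset_convexHull ℝ _ (Or.inr hxf)
  refine mem_convexHull_of_forall_ray_meets hx fun a ha => ?_
  by_cases haZ : a ∈ Z
  · obtain ⟨y, hy, hyZ⟩ := (convex_segment x a).isPreconnected.inter_frontier_nonempty
      ⟨a, right_mem_segment ℝ x a, haZ⟩ ⟨x, left_mem_segment ℝ x a, hxZ⟩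
    rw [segment_eq_image'] at hy
    obtain ⟨t, ⟨ht₀, -⟩, rfl⟩ := hy
    refine ⟨t, ht₀.lt_of_ne ?_, Or.inr hyZ⟩
    rintro rfl
    simp only [zero_smul, add_zero] at hyZ
    exact hxf hyZ
  · exact ⟨1, one_pos, Or.inl ⟨by simpa using ha, by simpa using haZ⟩⟩

theorem stmt9 {E : Type*} [NormedAddCommGroup E] [NormedSpace ℝ E]
    [FiniteDimensional ℝ E] (Z S : Set E) (hZ : IsOpen Z) (x : E)
    (hx : x ∈ convexHull ℝ S) (hxZ : x ∉ Z) :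
    x ∈ convexHull ℝ ((S \ Z) ∪ frontier Z) :=
  stmt9_general Z S x hx hxZ
end
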